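/- Suppose f satisfies (f1) and (f3). Then for every nonnegative u ∈ L²(ℝ^N): lim_{t→+∞} t⁻² ∫_{ℝ^N} F(t·u(x)) dx = (l₀/2)·∫_{ℝ^N} u(x)² dx, and lim_{t→+∞} t⁻¹ ∫_{ℝ^N} f(t·u(x))·u(x) dx = l₀·∫_{ℝ^N} u(x)² dx. -/

import Mathlib

open MeasureTheory Filter Topology Set
open scoped ENNReal NNReal

noncomputable section

abbrev RN (N : ℕ) : Type := EuclideanSpace ℝ (Fin N)

/-- Gagliardo seminorm squared `[u]_α²`, as an extended nonnegative real. -/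
def gagE (N : ℕ) (α : ℝ) (u : RN N → ℝ) : ℝ≥0∞ :=
  ∫⁻ x : RN N, ∫⁻ y : RN N, ENNReal.ofReal ((u x - u y) ^ 2 / ‖x - y‖ ^ ((N : ℝ) + 2 * α))

/-- `[u]_α²` as a real number. -/
def gagSq (N : ℕ) (α : ℝ) (u : RN N → ℝ) : ℝ := (gagE N α u).toReal

/-- Membership in the fractional Sobolev space `H^α(ℝ^N)`. -/
def memHalpha (N : ℕ) (α : ℝ) (u : RN N → ℝ) : Prop :=
  MemLp u 2 (volume : Measure (RN N)) ∧ gagE N α u < ⊤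

/-- Squared `L²` norm. -/
def l2Sq (N : ℕ) (u : RN N → ℝ) : ℝ := ∫ x : RN N, (u x) ^ 2

/-- Norm on `H^α`. -/
def normH (N : ℕ) (α : ℝ) (u : RN N → ℝ) : ℝ := Real.sqrt (gagSq N α u + l2Sq N u)

/-- The Gagliardo bilinear form `B(u,φ)`. -/
def Bform (N : ℕ) (α : ℝ) (u φ : RN N → ℝ) : ℝ :=
  ∫ x : RN N, ∫ y : RN N, ((u x - u y) * (φ x - φ y)) / ‖x - y‖ ^ ((N : ℝ) + 2 * α)

/-- `F(t) = ∫₀ᵗ f(s) ds`. -/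
def Fprim (f : ℝ → ℝ) (t : ℝ) : ℝ := ∫ s in (0 : ℝ)..t, f s

/-- `‖u‖_ε²`. -/
def normEpsSq (N : ℕ) (α : ℝ) (V : RN N → ℝ) (ε : ℝ) (u : RN N → ℝ) : ℝ :=
  gagSq N α u + ∫ x : RN N, V (ε • x) * (u x) ^ 2

/-- The energy functional `I_ε`. -/
def Ieps (N : ℕ) (α : ℝ) (V : RN N → ℝ) (f : ℝ → ℝ) (ε : ℝ) (u : RN N → ℝ) : ℝ :=
  normEpsSq N α V ε u / 2 - ∫ x : RN N, Fprim f (u x)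

/-- The Nehari manifold `M_ε`. -/
def Nehari (N : ℕ) (α : ℝ) (V : RN N → ℝ) (f : ℝ → ℝ) (ε : ℝ) : Set (RN N → ℝ) :=
  {u | memHalpha N α u ∧ u ≠ 0 ∧ normEpsSq N α V ε u = ∫ x : RN N, f (u x) * u x}

/-- The least energy `c_ε`. -/
def ceps (N : ℕ) (α : ℝ) (V : RN N → ℝ) (f : ℝ → ℝ) (ε : ℝ) : ℝ :=
  sInf (Ieps N α V f ε '' Nehari N α V f ε)

/-- The restricted set `Θ_ε`. -/
def ThetaEps (N : ℕ) (α : ℝ) (V : RN N → ℝ) (l₀ ε : ℝ) : Set (RN N → ℝ) :=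
  {u | memHalpha N α u ∧ normEpsSq N α V ε u - l₀ * l2Sq N u < 0}

/-- The autonomous energy functional `I_a`. -/
def Ia (N : ℕ) (α a : ℝ) (f : ℝ → ℝ) (u : RN N → ℝ) : ℝ :=
  (gagSq N α u + a * l2Sq N u) / 2 - ∫ x : RN N, Fprim f (u x)

/-- The autonomous Nehari manifold `M_a`. -/
def NehariA (N : ℕ) (α a : ℝ) (f : ℝ → ℝ) : Set (RN N → ℝ) :=
  {u | memHalpha N α u ∧ u ≠ 0 ∧ gagSq N α u + a * l2Sq N u = ∫ x : RN N, f (u x) * u x}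

/-- The autonomous least energy `c_a`. -/
def ca (N : ℕ) (α a : ℝ) (f : ℝ → ℝ) : ℝ := sInf (Ia N α a f '' NehariA N α a f)

/-- `V₀ = inf V`. -/
def V0 (N : ℕ) (V : RN N → ℝ) : ℝ := sInf (Set.range V)

/-- `V_∞ = liminf_{|x|→∞} V(x)`. -/
def Vinf (N : ℕ) (V : RN N → ℝ) : ℝ := Filter.liminf V (Filter.cocompact (RN N))

/-- The Gâteaux derivative `I'_ε(u)[φ]`. -/
def Ideriv (N : ℕ) (α : ℝ) (V : RN N → ℝ) (f : ℝ → ℝ) (ε : ℝ) (u φ : RN N → ℝ) : ℝ :=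
  Bform N α u φ + (∫ x : RN N, V (ε • x) * u x * φ x) - ∫ x : RN N, f (u x) * φ x

/-! (f1), (f3) and continuity give `|f s| ≤ C s` for `s > 0`, hence `|F s| ≤ C s² / 2`, so both
integrands are dominated by a multiple of `u²`. They converge pointwise because
`F s / s² → l₀ / 2` and `f s / s → l₀`, and dominated convergence concludes. Both limits are
instances of one statement about `(∫ g (t u)) / t²`, with `g = F` and `g s = f s * s`. -/

theorem exists_abs_le_of_tendsto_nhdsGT_of_tendsto_atTop {h : ℝ → ℝ} {a b : ℝ}
    (hc : ContinuousOn h (Ioi 0)) (ha : Tendsto h (𝓝[>] 0) (𝓝 a))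
    (hb : Tendsto h atTop (𝓝 b)) : ∃ C, ∀ s > 0, |h s| ≤ C := by
  obtain ⟨δ, hδ, hnear⟩ := mem_nhdsGT_iff_exists_Ioo_subset.mp
    (ha.abs.eventually (ge_mem_nhds (lt_add_one |a|)))
  obtain ⟨T, hfar⟩ := (hb.abs.eventually (ge_mem_nhds (lt_add_one |b|))).exists_forall_of_atTop
  obtain ⟨M, hM⟩ := isCompact_Icc.exists_bound_of_continuousOn
    (hc.mono fun s (hs : s ∈ Icc δ T) => hδ.trans_le hs.1)
  refine ⟨max (max (|a| + 1) (|b| + 1)) M, fun s hs => ?_⟩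
  rcases lt_or_ge s δ with hsδ | hsδ
  · exact (hnear ⟨hs, hsδ⟩ : |h s| ≤ |a| + 1).trans (le_max_of_le_left (le_max_left _ _))
  rcases le_or_gt T s with hsT | hsT
  · exact (hfar s hsT).trans (le_max_of_le_left (le_max_right _ _))
  · exact (hM s ⟨hsδ, hsT.le⟩).trans (le_max_right _ _)

theorem exists_abs_le_mul_of_tendsto_div {f : ℝ → ℝ} {a b : ℝ} (hf : Continuous f)
    (ha : Tendsto (fun s => f s / s) (𝓝[>] 0) (𝓝 a))
    (hb : Tendsto (fun s => f s / s) atTop (𝓝 b)) : ∃ C, ∀ s > 0, |f s| ≤ C * s := by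
  obtain ⟨C, hC⟩ := exists_abs_le_of_tendsto_nhdsGT_of_tendsto_atTop (h := fun s => f s / s)
    (hf.continuousOn.div continuousOn_id fun s (hs : 0 < s) => hs.ne') ha hb
  refine ⟨C, fun s hs => ?_⟩
  have := hC s hs
  rwa [abs_div, abs_of_pos hs, div_le_iff₀ hs] at this

section Primitive

variable {f : ℝ → ℝ} {C : ℝ}

theorem abs_Fprim_le (hf : Continuous f) (hC : ∀ s > 0, |f s| ≤ C * s) {s : ℝ} (hs : 0 ≤ s) :
    |Fprim f s| ≤ C * s ^ 2 / 2 :=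
  calc |Fprim f s| ≤ ∫ t in (0 : ℝ)..s, |f t| :=
        intervalIntegral.abs_integral_le_integral_abs hs
    _ ≤ ∫ t in (0 : ℝ)..s, C * t :=
        intervalIntegral.integral_mono_on_of_le_Ioo hs (hf.abs.intervalIntegrable _ _)
          ((continuous_const.mul continuous_id).intervalIntegrable _ _) fun t ht => hC t ht.1
    _ = C * s ^ 2 / 2 := by
        rw [intervalIntegral.integral_const_mul, integral_id]
        ring

theorem tendsto_Fprim_div_sq {l : ℝ} (hf : Continuous f) (hC : ∀ s > 0, |f s| ≤ C * s)
    (hl : Tendsto (fun s => f s / s) atTop (𝓝 l)) :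
    Tendsto (fun s => Fprim f s / s ^ 2) atTop (𝓝 (l / 2)) := by
  have hrescale : ∀ s ≠ 0, Fprim f s / s ^ 2 = ∫ σ in (0 : ℝ)..1, f (s * σ) / s := by
    intro s hs
    have := intervalIntegral.smul_integral_comp_mul_left (a := 0) (b := 1) f s
    rw [mul_zero, mul_one, smul_eq_mul] at this
    rw [Fprim, ← this, intervalIntegral.integral_div]
    field_simp
  have hlim : Tendsto (fun s => ∫ σ in (0 : ℝ)..1, f (s * σ) / s) atTop
      (𝓝 (∫ σ in (0 : ℝ)..1, l * σ)) := by
    refine intervalIntegral.tendsto_integral_filter_of_dominated_convergence (fun σ => C * σ)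
      (Eventually.of_forall fun s => by fun_prop) ?_
      ((continuous_const.mul continuous_id).intervalIntegrable _ _) ?_
    · filter_upwards [eventually_gt_atTop 0] with s hs
      filter_upwards with σ hσ
      rw [uIoc_of_le zero_le_one] at hσ
      rw [Real.norm_eq_abs, abs_div, abs_of_pos hs, div_le_iff₀ hs]
      calc |f (s * σ)| ≤ C * (s * σ) := hC _ (mul_pos hs hσ.1)
        _ = C * σ * s := by ring
    · filter_upwards with σ hσ
      rw [uIoc_of_le zero_le_one] at hσ
      refine ((hl.comp (tendsto_id.atTop_mul_const hσ.1)).mul_const σ).congr' ?_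
      filter_upwards [eventually_gt_atTop 0] with s hs
      have := hσ.1.ne'
      simp only [Function.comp_apply, id]
      field_simp
  have hval : ∫ σ in (0 : ℝ)..1, l * σ = l / 2 := by
    rw [intervalIntegral.integral_const_mul, integral_id]
    ring
  rw [hval] at hlim
  exact hlim.congr' ((eventually_ne_atTop 0).mono fun s hs => (hrescale s hs).symm)

end Primitive

theorem tendsto_integral_comp_mul_div_sq {α : Type*} [MeasurableSpace α] {μ : Measure α}
    {g : ℝ → ℝ} {C L : ℝ} (hg : Measurable g) (hgC : ∀ s, 0 ≤ s → |g s| ≤ C * s ^ 2)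
    (hgL : Tendsto (fun s => g s / s ^ 2) atTop (𝓝 L)) {u : α → ℝ} (hu : MemLp u 2 μ)
    (hu0 : ∀ᵐ x ∂μ, 0 ≤ u x) :
    Tendsto (fun t => (∫ x, g (t * u x) ∂μ) / t ^ 2) atTop (𝓝 (L * ∫ x, u x ^ 2 ∂μ)) := by
  simp_rw [← integral_div, ← integral_const_mul]
  refine tendsto_integral_filter_of_dominated_convergence (fun x => C * u x ^ 2)
    (Eventually.of_forall fun t => ((hg.comp_aemeasurable
      (hu.aestronglyMeasurable.aemeasurable.const_mul t)).div_const _).aestronglyMeasurable)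
    ?_ (hu.integrable_sq.const_mul C) ?_
  · filter_upwards [eventually_gt_atTop 0] with t ht
    filter_upwards [hu0] with x hx
    have ht2 : 0 < t ^ 2 := by positivity
    rw [Real.norm_eq_abs, abs_div, abs_of_pos ht2, div_le_iff₀ ht2]
    calc |g (t * u x)| ≤ C * (t * u x) ^ 2 := hgC _ (mul_nonneg ht.le hx)
      _ = C * u x ^ 2 * t ^ 2 := by ring
  · filter_upwards [hu0] with x hx
    rcases hx.eq_or_lt with hx | hx
    · have hg0 : g 0 = 0 := abs_nonpos_iff.mp (by simpa using hgC 0 le_rfl)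
      simp [← hx, hg0]
    · refine ((hgL.comp (tendsto_id.atTop_mul_const hx)).mul_const (u x ^ 2)).congr' ?_
      filter_upwards [eventually_gt_atTop 0] with t ht
      simp only [Function.comp_apply, id]
      field_simp

theorem statement2_general (N : ℕ) (f : ℝ → ℝ) (l₀ : ℝ)
    (hf1 : ContDiff ℝ 1 f)
    (hf1'' : Tendsto (fun t => f t / t) (𝓝[>] (0 : ℝ)) (𝓝 0))
    (hf3 : Tendsto (fun t => f t / t) atTop (𝓝 l₀))
    (u : RN N → ℝ) (hu2 : MemLp u 2 (volume : Measure (RN N)))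
    (hupos : ∀ x, 0 ≤ u x) :
    Tendsto (fun t : ℝ => (∫ x : RN N, Fprim f (t * u x)) / t ^ 2) atTop
      (𝓝 (l₀ / 2 * ∫ x : RN N, (u x) ^ 2)) ∧
    Tendsto (fun t : ℝ => (∫ x : RN N, f (t * u x) * u x) / t) atTop
      (𝓝 (l₀ * ∫ x : RN N, (u x) ^ 2)) := by
  have hf := hf1.continuous
  obtain ⟨C, hC⟩ := exists_abs_le_mul_of_tendsto_div hf hf1'' hf3
  have hu0 : ∀ᵐ x, 0 ≤ u x := Eventually.of_forall hupos
  constructor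
  · refine tendsto_integral_comp_mul_div_sq (C := C / 2)
      (intervalIntegral.continuous_primitive hf.intervalIntegrable 0).measurable
      (fun s hs => (abs_Fprim_le hf hC hs).trans_eq (by ring))
      (tendsto_Fprim_div_sq hf hC hf3) hu2 hu0
  · have hmul : Tendsto (fun t : ℝ => (∫ x : RN N, f (t * u x) * (t * u x)) / t ^ 2) atTop
        (𝓝 (l₀ * ∫ x : RN N, (u x) ^ 2)) := by
      refine tendsto_integral_comp_mul_div_sq (g := fun s => f s * s) (C := C)
        (hf.mul continuous_id).measurable (fun s hs => ?_) ?_ hu2 hu0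
      · rcases hs.eq_or_lt with rfl | hs
        · simp
        · rw [abs_mul, abs_of_pos hs, sq, ← mul_assoc]
          exact mul_le_mul_of_nonneg_right (hC s hs) hs.le
      · refine hf3.congr' ((eventually_ne_atTop 0).mono fun s hs => ?_)
        field_simp
    refine hmul.congr' ((eventually_ne_atTop 0).mono fun t ht => ?_)
    simp_rw [mul_left_comm _ t, integral_const_mul]
    field_simp

/-- under (f1), (f3), asymptotic behaviour of `∫ F(t u)` and `∫ f(t u) u`. -/
theorem statement2 (N : ℕ) (hN : 3 ≤ N) (f : ℝ → ℝ) (l₀ : ℝ) (hl₀ : 0 < l₀)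
    (hf1 : ContDiff ℝ 1 f) (hf1' : ∀ t ≤ (0 : ℝ), f t = 0)
    (hf1'' : Tendsto (fun t => f t / t) (𝓝[>] (0 : ℝ)) (𝓝 0))
    (hf3 : Tendsto (fun t => f t / t) atTop (𝓝 l₀))
    (u : RN N → ℝ) (hu2 : MemLp u 2 (volume : Measure (RN N)))
    (hupos : ∀ x, 0 ≤ u x) :
    Tendsto (fun t : ℝ => (∫ x : RN N, Fprim f (t * u x)) / t ^ 2) atTop
      (𝓝 (l₀ / 2 * ∫ x : RN N, (u x) ^ 2)) ∧
    Tendsto (fun t : ℝ => (∫ x : RN N, f (t * u x) * u x) / t) atTop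
      (𝓝 (l₀ * ∫ x : RN N, (u x) ^ 2)) :=
  statement2_general N f l₀ hf1 hf1'' hf3 u hu2 hupos

end
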